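/- For a rank-metric code C ≤ F_q^{n×m} and any subspace V ≤ F_q^n, dim C^⊥(V) = dim C^⊥ − m·dim V^⊥ + dim C(V^⊥), where C^⊥ = {X : tr(XY^T) = 0 for all Y ∈ C}. -/

import Mathlib

open Module

variable {K : Type} [Field K] [Fintype K] {n m : ℕ}

/-- Orthogonal complement w.r.t. the standard symmetric bilinear form on `Fin n → K`. -/
def stdPerp (V : Submodule K (Fin n → K)) : Submodule K (Fin n → K) where
  carrier := {w | ∀ v ∈ V, ∑ i, v i * w i = 0}
  zero_mem' := by intro v hv; simp
  add_mem' := by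
    intro a b ha hb v hv
    simp [Pi.add_apply, mul_add, Finset.sum_add_distrib, ha v hv, hb v hv]
  smul_mem' := by
    intro c a ha v hv
    simp only [Pi.smul_apply, smul_eq_mul, mul_left_comm, ← Finset.mul_sum, ha v hv, mul_zero]

/-- Matrices all of whose columns lie in `V` (i.e. with column space contained in `V`). -/
def colIn (m : ℕ) (V : Submodule K (Fin n → K)) : Submodule K (Matrix (Fin n) (Fin m) K) where
  carrier := {X | ∀ j, (fun i => X i j) ∈ V}
  zero_mem' := by
    intro j
    show (fun i => (0 : Matrix (Fin n) (Fin m) K) i j) ∈ V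
    simp only [Matrix.zero_apply]
    exact V.zero_mem
  add_mem' := by
    intro a b ha hb j
    exact V.add_mem (ha j) (hb j)
  smul_mem' := by
    intro c X hX j
    exact V.smul_mem c (hX j)

/-- The shortened subcode `C(W) = {X ∈ C : colsp X ≤ W}`. -/
def shortened (C : Submodule K (Matrix (Fin n) (Fin m) K))
    (W : Submodule K (Fin n → K)) : Submodule K (Matrix (Fin n) (Fin m) K) :=
  C ⊓ colIn m W

/-- The `q`-polymatroid rank function `ρ_C(V) = (dim C − dim C(V^⊥))/m`. -/
noncomputable def rhoCode (C : Submodule K (Matrix (Fin n) (Fin m) K))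
    (V : Submodule K (Fin n → K)) : ℚ :=
  ((finrank K C : ℚ) - (finrank K (shortened C (stdPerp V)) : ℚ)) / m

/-- The trace-dual code `C^⊥ = {X : tr(X Yᵀ) = 0 for all Y ∈ C}`. -/
def dualCode (C : Submodule K (Matrix (Fin n) (Fin m) K)) :
    Submodule K (Matrix (Fin n) (Fin m) K) where
  carrier := {X | ∀ Y ∈ C, ∑ i, ∑ j, X i j * Y i j = 0}
  zero_mem' := by intro Y hY; simp
  add_mem' := by
    intro a b ha hb Y hY
    simp [Matrix.add_apply, add_mul, Finset.sum_add_distrib, ha Y hY, hb Y hY]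
  smul_mem' := by
    intro c X hX Y hY
    simp only [Matrix.smul_apply, smul_eq_mul, mul_assoc, ← Finset.mul_sum, hX Y hY, mul_zero]
/-!
For a nondegenerate reflexive bilinear form, `(A^⊥ + W)^⊥ = A ∩ W^⊥`, so counting dimensions in
`A^⊥ + W` gives `dim (A^⊥ ∩ W) + dim M = dim A^⊥ + dim W + dim (A ∩ W^⊥)`. Apply this to the trace
form `tr (X Yᵀ)` with `A = C` and `W` the matrices whose columns lie in `V`. The trace-orthogonal of
`W` is the space of matrices whose columns lie in `V^⊥`, so `A ∩ W^⊥ = C(V^⊥)`, and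
`dim W = m · dim V = m · (n - dim V^⊥)`.
-/

namespace LinearMap.BilinForm

variable {F M : Type*} [Field F] [AddCommGroup M] [Module F M]

theorem orthogonal_sup (B : LinearMap.BilinForm F M) (A W : Submodule F M) :
    B.orthogonal (A ⊔ W) = B.orthogonal A ⊓ B.orthogonal W := by
  refine le_antisymm (le_inf (B.orthogonal_le le_sup_left) (B.orthogonal_le le_sup_right)) ?_
  rintro x ⟨hA, hW⟩ y hy
  obtain ⟨a, ha, w, hw, rfl⟩ := Submodule.mem_sup.mp hy
  change B (a + w) x = 0
  rw [map_add, LinearMap.add_apply, hA a ha, hW w hw, add_zero]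

variable [FiniteDimensional F M] {B : LinearMap.BilinForm F M}

theorem Nondegenerate.finrank_add_finrank_orthogonal (hB : B.Nondegenerate) (W : Submodule F M) :
    finrank F W + finrank F (B.orthogonal W) = finrank F M := by
  rw [finrank_add_finrank_orthogonal', hB.ker_eq_bot, inf_bot_eq, finrank_bot, add_zero]

theorem Nondegenerate.finrank_orthogonal_inf_add_finrank (hB : B.Nondegenerate) (hB₀ : B.IsRefl)
    (A W : Submodule F M) :
    finrank F ↥(B.orthogonal A ⊓ W) + finrank F M =
      finrank F (B.orthogonal A) + finrank F W + finrank F ↥(A ⊓ B.orthogonal W) := by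
  have hsup :
      finrank F ↥(B.orthogonal A ⊔ W) + finrank F ↥(A ⊓ B.orthogonal W) = finrank F M := by
    rw [← hB.finrank_add_finrank_orthogonal (B.orthogonal A ⊔ W), orthogonal_sup,
      orthogonal_orthogonal hB hB₀]
  have hmodular := Submodule.finrank_sup_add_finrank_inf_eq (B.orthogonal A) W
  omega

end LinearMap.BilinForm

namespace Matrix

variable {F ι κ : Type*} [Field F] [Fintype ι] [Fintype κ]

theorem dotProductBilin_nondegenerate :
    (dotProductBilin F F : LinearMap.BilinForm F (ι → F)).Nondegenerate :=
  LinearMap.BilinForm.Nondegenerate.ofSeparatingLeft fun v hv => dotProduct_eq_zero v hv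

variable (F ι κ) in
/-- The trace form `(X, Y) ↦ tr (X Yᵀ)`. -/
def frobeniusForm : LinearMap.BilinForm F (Matrix ι κ F) :=
  LinearMap.mk₂ F (fun X Y => ∑ i, ∑ j, X i j * Y i j)
    (fun X X' Y => by simp [add_mul, Finset.sum_add_distrib])
    (fun c X Y => by simp [Finset.mul_sum, mul_assoc])
    (fun X Y Y' => by simp [mul_add, Finset.sum_add_distrib])
    (fun c X Y => by simp [Finset.mul_sum, mul_left_comm])

theorem frobeniusForm_apply (X Y : Matrix ι κ F) :
    frobeniusForm F ι κ X Y = ∑ i, ∑ j, X i j * Y i j := rfl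

theorem frobeniusForm_apply_eq_sum_transpose (X Y : Matrix ι κ F) :
    frobeniusForm F ι κ X Y = ∑ j, Xᵀ j ⬝ᵥ Yᵀ j :=
  Finset.sum_comm

theorem frobeniusForm_isSymm : (frobeniusForm F ι κ).IsSymm :=
  ⟨fun X Y => by simp only [frobeniusForm_apply, mul_comm]⟩

theorem frobeniusForm_nondegenerate : (frobeniusForm F ι κ).Nondegenerate := by
  classical
  refine LinearMap.BilinForm.Nondegenerate.ofSeparatingLeft fun X hX => ?_
  ext i j
  simpa [frobeniusForm_apply, single_apply, ite_and, Finset.sum_ite_eq] using hX (single i j 1)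

end Matrix

section ColumnSpaces

open Matrix

variable {F : Type} [Field F] {n m : ℕ}

theorem stdPerp_eq_orthogonal (V : Submodule F (Fin n → F)) :
    stdPerp V = LinearMap.BilinForm.orthogonal (dotProductBilin F F) V := rfl

theorem finrank_add_finrank_stdPerp (V : Submodule F (Fin n → F)) :
    finrank F V + finrank F (stdPerp V) = n := by
  rw [stdPerp_eq_orthogonal,
    LinearMap.BilinForm.Nondegenerate.finrank_add_finrank_orthogonal dotProductBilin_nondegenerate,
    finrank_fin_fun]

theorem dualCode_eq_orthogonal (C : Submodule F (Matrix (Fin n) (Fin m) F)) :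
    dualCode C = (frobeniusForm F (Fin n) (Fin m)).orthogonal C := by
  ext X
  refine forall₂_congr fun Y _ => ?_
  rw [frobeniusForm_isSymm.eq]
  rfl

def colInEquiv (V : Submodule F (Fin n → F)) : colIn m V ≃ₗ[F] (Fin m → V) where
  toFun X j := ⟨fun i => X.1 i j, X.2 j⟩
  map_add' _ _ := rfl
  map_smul' _ _ := rfl
  invFun f := ⟨Matrix.of fun i j => (f j).1 i, fun j => (f j).2⟩
  left_inv _ := rfl
  right_inv _ := rfl

theorem finrank_colIn (V : Submodule F (Fin n → F)) :
    finrank F (colIn m V) = m * finrank F V := by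
  rw [(colInEquiv V).finrank_eq, Module.finrank_pi_fintype, Finset.sum_const, Finset.card_univ,
    Fintype.card_fin, smul_eq_mul]

theorem frobeniusForm_orthogonal_colIn (V : Submodule F (Fin n → F)) :
    (frobeniusForm F (Fin n) (Fin m)).orthogonal (colIn m V) = colIn m (stdPerp V) := by
  ext X
  constructor
  · intro hX j v hv
    have hcol : updateCol 0 j v ∈ colIn m V := by
      intro j'
      rcases eq_or_ne j' j with rfl | hj
      · simpa [updateCol_apply] using hv
      · simp only [updateCol_apply, hj, if_false]
        exact V.zero_mem
    simpa [frobeniusForm_apply, updateCol_apply] using hX _ hcol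
  · intro hX Y hY
    change frobeniusForm F (Fin n) (Fin m) Y X = 0
    rw [frobeniusForm_apply_eq_sum_transpose]
    exact Finset.sum_eq_zero fun j _ => hX j _ (hY j)

end ColumnSpaces

/-- `dim C^⊥(V) = dim C^⊥ − m·dim V^⊥ + dim C(V^⊥)`. -/
theorem dim_shortened_dualCode
    (C : Submodule K (Matrix (Fin n) (Fin m) K)) (V : Submodule K (Fin n → K)) :
    (finrank K (shortened (dualCode C) V) : ℤ) =
      (finrank K (dualCode C) : ℤ) - (m : ℤ) * (finrank K (stdPerp V) : ℤ)
        + (finrank K (shortened C (stdPerp V)) : ℤ) := by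
  have key := LinearMap.BilinForm.Nondegenerate.finrank_orthogonal_inf_add_finrank
    Matrix.frobeniusForm_nondegenerate Matrix.frobeniusForm_isSymm.isRefl C (colIn m V)
  rw [← dualCode_eq_orthogonal, frobeniusForm_orthogonal_colIn, finrank_colIn,
    Module.finrank_matrix, Fintype.card_fin, Fintype.card_fin, finrank_self, mul_one] at key
  have hV := finrank_add_finrank_stdPerp V
  unfold shortened
  zify at key hV
  linear_combination key + m * hV
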